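/- arXiv:0711.1710 — 2 statements merged into one kernel-verified Lean document; each statement's English description precedes it below -/
import Mathlib

section
/- For every real s > 2, ∫₀^∞ u^{s/2+3} θ''(u)² du = 9/(8(s−2)) + ∫₁^∞ u^{s/2+3} θ''(u)² du + ∫₁^∞ u^{−s/2+4} θ''(u)² du + 6 ∫₁^∞ u^{−s/2+3} θ'(u) θ''(u) du + (3/2) ∫₁^∞ u^{−s/2+2} θ(u) θ''(u) du + (9/2) ∫₁^∞ u^{−s/2+1} θ(u) θ'(u) du + 9 ∫₁^∞ u^{−s/2+2} θ'(u)² du + (9/16) ∫₁^∞ u^{−s/2} (θ(u)² − 1) du. -/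
open MeasureTheory

/-- The Jacobi theta function `θ(u) = ∑_{n∈ℤ} e^{-πn²u}`. -/
noncomputable def jTheta (u : ℝ) : ℝ := ∑' n : ℤ, Real.exp (-Real.pi * (n : ℝ) ^ 2 * u)

/-!
Split `(0, ∞)` at `1` and substitute `u ↦ 1/u` on `(0, 1)`. Differentiating the reciprocity law
`θ(1/x) = √x θ(x)` twice gives `θ''(1/x) = x^{5/2} (3/4 θ(x) + 3x θ'(x) + x² θ''(x))`, so the
substituted integrand is `x^{-s/2} (3/4 θ + 3x θ' + x² θ'')²`. Expanding the square and writing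
`θ² = (θ² - 1) + 1` produces the integrals over `(1, ∞)` together with
`9/16 ∫₁^∞ x^{-s/2} dx = 9/(8(s-2))`. Every other integral over `(1, ∞)` converges because
`θ - 1`, `θ'` and `θ''` decay like `e^{-πx}`.
-/

open Real Set Filter Topology Asymptotics

noncomputable def thetaDerivSeries (k : ℕ) (u : ℝ) : ℝ :=
  ∑' n : ℤ, (-π * n ^ 2) ^ k * exp (-π * n ^ 2 * u)

lemma summable_norm_thetaDerivSeries_term (k : ℕ) {u : ℝ} (hu : 0 < u) :
    Summable fun n : ℤ ↦ ‖(-π * n ^ 2) ^ k * exp (-π * n ^ 2 * u)‖ := by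
  refine ((summable_pow_mul_jacobiTheta₂_term_bound 0 hu (2 * k)).mul_left (π ^ k)).congr
    fun n ↦ ?_
  rw [norm_mul, norm_pow, norm_mul, norm_neg, norm_of_nonneg pi_pos.le,
    norm_of_nonneg (exp_pos _).le, norm_pow, Real.norm_eq_abs, pow_mul, Int.cast_abs, sq_abs]
  ring_nf

lemma hasDerivAt_thetaDerivSeries (k : ℕ) {u : ℝ} (hu : 0 < u) :
    HasDerivAt (thetaDerivSeries k) (thetaDerivSeries (k + 1) u) u := by
  have hterm (n : ℤ) (y : ℝ) : HasDerivAt (fun v ↦ (-π * n ^ 2) ^ k * exp (-π * n ^ 2 * v))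
      ((-π * n ^ 2) ^ (k + 1) * exp (-π * n ^ 2 * y)) y := by
    refine (((hasDerivAt_id' y).const_mul (-π * n ^ 2)).exp.const_mul _).congr_deriv ?_
    ring
  refine hasDerivAt_tsum_of_isPreconnected
    (summable_norm_thetaDerivSeries_term (k + 1) (half_pos hu)) isOpen_Ioi isPreconnected_Ioi
    (fun n y _ ↦ hterm n y) (fun n y hy ↦ ?_) (half_lt_self hu)
    (summable_norm_thetaDerivSeries_term k hu).of_norm (half_lt_self hu)
  rw [norm_mul, norm_mul, norm_of_nonneg (exp_pos _).le, norm_of_nonneg (exp_pos _).le]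
  refine mul_le_mul_of_nonneg_left (exp_le_exp.mpr (mul_le_mul_of_nonpos_left (le_of_lt hy) ?_))
    (norm_nonneg _)
  exact mul_nonpos_of_nonpos_of_nonneg (neg_nonpos.mpr pi_pos.le) (sq_nonneg _)

lemma exp_neg_pi_mul_sq_mul_le {n : ℤ} (hn : n ≠ 0) {u : ℝ} (hu : 1 ≤ u) :
    exp (-π * n ^ 2 * u) ≤ exp (-π * n ^ 2) * exp π * exp (-π * u) := by
  have hn2 : (1 : ℝ) ≤ (n : ℝ) ^ 2 := by
    exact_mod_cast one_le_sq_iff_one_le_abs _ |>.mpr (Int.one_le_abs hn)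
  rw [← exp_add, ← exp_add, exp_le_exp]
  nlinarith [mul_nonneg (mul_nonneg pi_pos.le (sub_nonneg.mpr hn2)) (sub_nonneg.mpr hu)]

-- `0 ^ k` is the term `n = 0`: it is `1` for `θ` itself and `0` for its derivatives.
lemma isBigO_thetaDerivSeries_sub (k : ℕ) :
    (fun u ↦ thetaDerivSeries k u - 0 ^ k) =O[atTop] fun u ↦ exp (-π * u) := by
  set a : ℤ → ℝ := fun n ↦ ‖(-π * n ^ 2) ^ k * exp (-π * n ^ 2)‖
  have ha : Summable a := by simpa [a] using summable_norm_thetaDerivSeries_term k one_pos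
  refine .of_bound ((∑' n, a n) * exp π) ?_
  filter_upwards [eventually_ge_atTop 1] with u hu
  rw [thetaDerivSeries,
    (summable_norm_thetaDerivSeries_term k (by linarith)).of_norm.tsum_eq_add_tsum_ite 0]
  simp only [Int.cast_zero, ne_eq, OfNat.ofNat_ne_zero, not_false_eq_true, zero_pow, mul_zero,
    zero_mul, exp_zero, mul_one, add_sub_cancel_left, norm_of_nonneg (exp_pos _).le]
  refine tsum_of_norm_bounded ((ha.hasSum.mul_right (exp π)).mul_right (exp (-π * u)))
    fun n ↦ ?_
  split_ifs with hn
  · rw [norm_zero]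
    positivity
  · simp only [a, norm_mul, norm_of_nonneg (exp_pos _).le, mul_assoc]
    exact mul_le_mul_of_nonneg_left
      (by simpa only [mul_assoc] using exp_neg_pi_mul_sq_mul_le hn hu) (norm_nonneg _)

lemma iterate_deriv_jTheta_eqOn (k : ℕ) :
    EqOn (deriv^[k] jTheta) (thetaDerivSeries k) (Ioi 0) := by
  induction k with
  | zero => intro u _; simp [jTheta, thetaDerivSeries]
  | succ k ih =>
    intro u hu
    rw [Function.iterate_succ_apply', ← (hasDerivAt_thetaDerivSeries k hu).deriv]
    exact (eventuallyEq_of_mem (isOpen_Ioi.mem_nhds hu) ih).deriv_eq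

lemma hasDerivAt_iterate_deriv_jTheta (k : ℕ) {u : ℝ} (hu : 0 < u) :
    HasDerivAt (deriv^[k] jTheta) (deriv^[k + 1] jTheta u) u := by
  rw [iterate_deriv_jTheta_eqOn (k + 1) hu]
  exact (hasDerivAt_thetaDerivSeries k hu).congr_of_eventuallyEq
    (eventuallyEq_of_mem (isOpen_Ioi.mem_nhds hu) (iterate_deriv_jTheta_eqOn k))

lemma hasDerivAt_jTheta {u : ℝ} (hu : 0 < u) : HasDerivAt jTheta (deriv jTheta u) u :=
  hasDerivAt_iterate_deriv_jTheta 0 hu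

lemma hasDerivAt_deriv_jTheta {u : ℝ} (hu : 0 < u) :
    HasDerivAt (deriv jTheta) (deriv (deriv jTheta) u) u :=
  hasDerivAt_iterate_deriv_jTheta 1 hu

lemma continuousOn_iterate_deriv_jTheta (k : ℕ) : ContinuousOn (deriv^[k] jTheta) (Ioi 0) :=
  fun _ hu ↦ (hasDerivAt_iterate_deriv_jTheta k hu).continuousAt.continuousWithinAt

lemma isBigO_iterate_deriv_jTheta_sub (k : ℕ) :
    (fun u ↦ deriv^[k] jTheta u - 0 ^ k) =O[atTop] fun u ↦ exp (-π * u) := by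
  refine (isBigO_thetaDerivSeries_sub k).congr' ?_ .rfl
  filter_upwards [eventually_gt_atTop 0] with u hu
  rw [iterate_deriv_jTheta_eqOn k hu]

lemma isBigO_iterate_deriv_jTheta {k : ℕ} (hk : k ≠ 0) :
    deriv^[k] jTheta =O[atTop] fun u ↦ exp (-π * u) := by
  simpa [zero_pow hk] using isBigO_iterate_deriv_jTheta_sub k

lemma isBigO_exp_neg_mul_one {b : ℝ} (hb : 0 ≤ b) :
    (fun u ↦ exp (-b * u)) =O[atTop] fun _ ↦ (1 : ℝ) := by
  refine .of_bound 1 ?_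
  filter_upwards [eventually_ge_atTop 0] with u hu
  rw [norm_of_nonneg (exp_pos _).le, norm_one, one_mul, exp_le_one_iff]
  nlinarith

lemma isBigO_iterate_deriv_jTheta_one (k : ℕ) :
    deriv^[k] jTheta =O[atTop] fun _ ↦ (1 : ℝ) := by
  simpa using ((isBigO_iterate_deriv_jTheta_sub k).trans (isBigO_exp_neg_mul_one pi_pos.le)).add
    (isBigO_const_const ((0 : ℝ) ^ k) one_ne_zero atTop)

lemma eq_neg_sq_mul_of_comp_inv {f g : ℝ → ℝ} {f' g' x : ℝ} (hx : x ≠ 0)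
    (hfg : (fun y ↦ f y⁻¹) =ᶠ[𝓝 x] g) (hf : HasDerivAt f f' x⁻¹) (hg : HasDerivAt g g' x) :
    f' = -x ^ 2 * g' := by
  rw [← ((hf.comp x (hasDerivAt_inv hx)).congr_of_eventuallyEq hfg.symm).unique hg]
  field_simp

lemma jTheta_inv {x : ℝ} (hx : 0 < x) : jTheta x⁻¹ = √x * jTheta x := by
  have h (t : ℝ) (ht : 0 < t) : jTheta t = HurwitzZeta.evenKernel 0 t := by
    simpa [jTheta, neg_mul] using (HurwitzZeta.hasSum_int_evenKernel 0 ht).tsum_eq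
  rw [h x hx, h _ (inv_pos.2 hx), HurwitzZeta.evenKernel_functional_equation,
    HurwitzZeta.evenKernel_eq_cosKernel_of_zero, sqrt_eq_rpow, inv_rpow hx.le]
  simp only [one_div, inv_inv]

lemma deriv_jTheta_inv {x : ℝ} (hx : 0 < x) :
    deriv jTheta x⁻¹ = -(x * √x) * (jTheta x / 2 + x * deriv jTheta x) := by
  have hfg : (fun y ↦ jTheta y⁻¹) =ᶠ[𝓝 x] fun y ↦ √y * jTheta y :=
    eventually_of_mem (isOpen_Ioi.mem_nhds hx) fun y hy ↦ jTheta_inv hy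
  rw [eq_neg_sq_mul_of_comp_inv hx.ne' hfg (hasDerivAt_jTheta (inv_pos.2 hx))
    ((hasDerivAt_sqrt hx.ne').mul (hasDerivAt_jTheta hx))]
  obtain ⟨t, ht, rfl⟩ : ∃ t, 0 < t ∧ x = t ^ 2 := ⟨√x, sqrt_pos.2 hx, (sq_sqrt hx.le).symm⟩
  rw [sqrt_sq ht.le]
  field_simp

lemma deriv_deriv_jTheta_inv {x : ℝ} (hx : 0 < x) :
    deriv (deriv jTheta) x⁻¹ = x ^ 2 * √x *
      (3 / 4 * jTheta x + 3 * x * deriv jTheta x + x ^ 2 * deriv (deriv jTheta) x) := by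
  have hfg : (fun y ↦ deriv jTheta y⁻¹) =ᶠ[𝓝 x]
      fun y ↦ -(y * √y) * (jTheta y / 2 + y * deriv jTheta y) :=
    eventually_of_mem (isOpen_Ioi.mem_nhds hx) fun y hy ↦ deriv_jTheta_inv hy
  rw [eq_neg_sq_mul_of_comp_inv hx.ne' hfg (hasDerivAt_deriv_jTheta (inv_pos.2 hx))
    (((hasDerivAt_id' x).mul (hasDerivAt_sqrt hx.ne')).neg.mul
      (((hasDerivAt_jTheta hx).div_const 2).add
        ((hasDerivAt_id' x).mul (hasDerivAt_deriv_jTheta hx))))]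
  obtain ⟨t, ht, rfl⟩ : ∃ t, 0 < t ∧ x = t ^ 2 := ⟨√x, sqrt_pos.2 hx, (sq_sqrt hx.le).symm⟩
  simp only [Pi.neg_apply, Pi.mul_apply, sqrt_sq ht.le]
  field_simp
  ring

lemma integrableOn_rpow_mul_of_isBigO_exp {f : ℝ → ℝ} {a b : ℝ} (ha : 0 < a) (hb : 0 < b)
    (c : ℝ) (hf : ContinuousOn f (Ici a)) (ho : f =O[atTop] fun x ↦ exp (-b * x)) :
    IntegrableOn (fun x ↦ x ^ c * f x) (Ioi a) := by
  refine integrable_of_isBigO_exp_neg (half_pos hb)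
    ((continuousOn_id.rpow_const fun x hx ↦ Or.inl (ha.trans_le hx).ne').mul hf) ?_
  refine ((isLittleO_rpow_exp_pos_mul_atTop c (half_pos hb)).isBigO.mul ho).congr_right
    fun x ↦ ?_
  rw [← exp_add]
  ring_nf

lemma integrableOn_rpow_mul_iterate_deriv_jTheta_mul (c : ℝ) (j : ℕ) {k : ℕ} (hk : k ≠ 0) :
    IntegrableOn (fun u ↦ u ^ c * (deriv^[j] jTheta u * deriv^[k] jTheta u)) (Ioi 1) :=
  integrableOn_rpow_mul_of_isBigO_exp one_pos pi_pos c
    (((continuousOn_iterate_deriv_jTheta j).mul (continuousOn_iterate_deriv_jTheta k)).mono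
      (Ici_subset_Ioi.2 one_pos))
    (((isBigO_iterate_deriv_jTheta_one j).mul (isBigO_iterate_deriv_jTheta hk)).congr_right
      fun _ ↦ one_mul _)

lemma integrableOn_rpow_mul_jTheta_sq_sub_one (c : ℝ) :
    IntegrableOn (fun u ↦ u ^ c * (jTheta u ^ 2 - 1)) (Ioi 1) := by
  refine integrableOn_rpow_mul_of_isBigO_exp one_pos pi_pos c
    ((((continuousOn_iterate_deriv_jTheta 0).pow 2).sub continuousOn_const).mono
      (Ici_subset_Ioi.2 one_pos)) ?_
  refine ((isBigO_iterate_deriv_jTheta_sub 0).mul ((isBigO_iterate_deriv_jTheta_one 0).add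
    (isBigO_refl (fun _ ↦ (1 : ℝ)) atTop))).congr (fun u ↦ ?_) fun _ ↦ mul_one _
  simp only [Function.iterate_zero, id, pow_zero]
  ring

open scoped Pointwise in
lemma image_inv_Ioi_one : Inv.inv '' Ioi (1 : ℝ) = Ioo 0 1 := by
  rw [image_inv_eq_inv, inv_Ioi₀ one_pos, inv_one]

lemma hasDerivWithinAt_inv_Ioi_one :
    ∀ x ∈ Ioi (1 : ℝ), HasDerivWithinAt Inv.inv (-(x ^ 2)⁻¹) (Ioi 1) x :=
  fun _ hx ↦ (hasDerivAt_inv (zero_lt_one.trans hx).ne').hasDerivWithinAt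

section InvSubstitution

variable {E : Type*} [NormedAddCommGroup E] [NormedSpace ℝ E]

lemma integrableOn_Ioo_zero_one_iff (f : ℝ → E) :
    IntegrableOn f (Ioo 0 1) ↔ IntegrableOn (fun x ↦ (x ^ 2)⁻¹ • f x⁻¹) (Ioi 1) := by
  rw [← image_inv_Ioi_one, integrableOn_image_iff_integrableOn_abs_deriv_smul measurableSet_Ioi
    hasDerivWithinAt_inv_Ioi_one inv_injective.injOn]
  simp only [abs_neg, abs_inv, abs_sq]

lemma integral_Ioo_zero_one_eq (f : ℝ → E) :
    ∫ x in Ioo 0 1, f x = ∫ x in Ioi 1, (x ^ 2)⁻¹ • f x⁻¹ := by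
  rw [← image_inv_Ioi_one, integral_image_eq_integral_abs_deriv_smul measurableSet_Ioi
    hasDerivWithinAt_inv_Ioi_one inv_injective.injOn]
  simp only [abs_neg, abs_inv, abs_sq]

end InvSubstitution

lemma inv_sq_smul_rpow_mul_sq_deriv_deriv_jTheta_inv (s : ℝ) {x : ℝ} (hx : 0 < x) :
    (x ^ 2)⁻¹ • (x⁻¹ ^ (s / 2 + 3) * deriv (deriv jTheta) x⁻¹ ^ 2)
      = x ^ (-s / 2 + 4) * deriv (deriv jTheta) x ^ 2
        + 6 * (x ^ (-s / 2 + 3) * (deriv jTheta x * deriv (deriv jTheta) x))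
        + 3 / 2 * (x ^ (-s / 2 + 2) * (jTheta x * deriv (deriv jTheta) x))
        + 9 / 2 * (x ^ (-s / 2 + 1) * (jTheta x * deriv jTheta x))
        + 9 * (x ^ (-s / 2 + 2) * deriv jTheta x ^ 2)
        + 9 / 16 * (x ^ (-s / 2) * (jTheta x ^ 2 - 1))
        + 9 / 16 * x ^ (-s / 2) := by
  rw [deriv_deriv_jTheta_inv hx, smul_eq_mul, inv_rpow hx.le, neg_div, rpow_add hx, rpow_add hx,
    rpow_add hx, rpow_add hx, rpow_add hx, rpow_neg hx.le]
  simp only [rpow_ofNat, rpow_one]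
  field_simp
  rw [sq_sqrt hx.le]
  ring

lemma integral_Ioi_one_rpow_neg_half {s : ℝ} (hs : 2 < s) :
    ∫ x in Ioi 1, x ^ (-s / 2) = 2 / (s - 2) := by
  rw [integral_Ioi_rpow_of_lt (by linarith) one_pos, one_rpow,
    show -s / 2 + 1 = -((s - 2) / 2) by ring, neg_div_neg_eq, one_div_div]

lemma integrableOn_Ioo_zero_one_and_integral_eq (s : ℝ) (hs : 2 < s) :
    IntegrableOn (fun u ↦ u ^ (s / 2 + 3) * deriv (deriv jTheta) u ^ 2) (Ioo 0 1) ∧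
    ∫ u in Ioo 0 1, u ^ (s / 2 + 3) * deriv (deriv jTheta) u ^ 2
      = 9 / (8 * (s - 2))
        + (∫ u in Ioi 1, u ^ (-s / 2 + 4) * deriv (deriv jTheta) u ^ 2)
        + 6 * (∫ u in Ioi 1, u ^ (-s / 2 + 3) * (deriv jTheta u * deriv (deriv jTheta) u))
        + 3 / 2 * (∫ u in Ioi 1, u ^ (-s / 2 + 2) * (jTheta u * deriv (deriv jTheta) u))
        + 9 / 2 * (∫ u in Ioi 1, u ^ (-s / 2 + 1) * (jTheta u * deriv jTheta u))
        + 9 * (∫ u in Ioi 1, u ^ (-s / 2 + 2) * deriv jTheta u ^ 2)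
        + 9 / 16 * ∫ u in Ioi 1, u ^ (-s / 2) * (jTheta u ^ 2 - 1) := by
  set g₁ : ℝ → ℝ := fun u ↦ u ^ (-s / 2 + 4) * deriv (deriv jTheta) u ^ 2
  set g₂ : ℝ → ℝ := fun u ↦ u ^ (-s / 2 + 3) * (deriv jTheta u * deriv (deriv jTheta) u)
  set g₃ : ℝ → ℝ := fun u ↦ u ^ (-s / 2 + 2) * (jTheta u * deriv (deriv jTheta) u)
  set g₄ : ℝ → ℝ := fun u ↦ u ^ (-s / 2 + 1) * (jTheta u * deriv jTheta u)
  set g₅ : ℝ → ℝ := fun u ↦ u ^ (-s / 2 + 2) * deriv jTheta u ^ 2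
  set g₆ : ℝ → ℝ := fun u ↦ u ^ (-s / 2) * (jTheta u ^ 2 - 1)
  set g₇ : ℝ → ℝ := fun u ↦ u ^ (-s / 2)
  -- stated with `Integrable` rather than `IntegrableOn` so that `fun_prop` can combine them
  have h₁ : Integrable g₁ (volume.restrict (Ioi 1)) := by
    simp only [g₁, sq]; exact integrableOn_rpow_mul_iterate_deriv_jTheta_mul _ 2 two_ne_zero
  have h₂ : Integrable g₂ (volume.restrict (Ioi 1)) :=
    integrableOn_rpow_mul_iterate_deriv_jTheta_mul _ 1 two_ne_zero
  have h₃ : Integrable g₃ (volume.restrict (Ioi 1)) :=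
    integrableOn_rpow_mul_iterate_deriv_jTheta_mul _ 0 two_ne_zero
  have h₄ : Integrable g₄ (volume.restrict (Ioi 1)) :=
    integrableOn_rpow_mul_iterate_deriv_jTheta_mul _ 0 one_ne_zero
  have h₅ : Integrable g₅ (volume.restrict (Ioi 1)) := by
    simp only [g₅, sq]; exact integrableOn_rpow_mul_iterate_deriv_jTheta_mul _ 1 one_ne_zero
  have h₆ : Integrable g₆ (volume.restrict (Ioi 1)) := integrableOn_rpow_mul_jTheta_sq_sub_one _
  have h₇ : Integrable g₇ (volume.restrict (Ioi 1)) :=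
    integrableOn_Ioi_rpow_of_lt (by linarith) one_pos
  have hsubst : EqOn (fun x ↦ (x ^ 2)⁻¹ • (x⁻¹ ^ (s / 2 + 3) * deriv (deriv jTheta) x⁻¹ ^ 2))
      (fun x ↦ g₁ x + 6 * g₂ x + 3 / 2 * g₃ x + 9 / 2 * g₄ x + 9 * g₅ x + 9 / 16 * g₆ x
        + 9 / 16 * g₇ x) (Ioi 1) :=
    fun x hx ↦ inv_sq_smul_rpow_mul_sq_deriv_deriv_jTheta_inv s (zero_lt_one.trans hx)
  constructor
  · rw [integrableOn_Ioo_zero_one_iff]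
    refine IntegrableOn.congr_fun ?_ hsubst.symm measurableSet_Ioi
    unfold IntegrableOn
    fun_prop
  · rw [integral_Ioo_zero_one_eq, setIntegral_congr_fun measurableSet_Ioi hsubst]
    simp (disch := fun_prop) only [integral_add, integral_const_mul]
    rw [integral_Ioi_one_rpow_neg_half hs]
    field_simp
    ring

/-- For every real `s > 2`, the splitting of `∫₀^∞ u^{s/2+3} θ''(u)² du` into
integrals over `(1,∞)` plus the pole term `9/(8(s-2))`. -/
theorem I3_split (s : ℝ) (hs : 2 < s) :
    (∫ u in Set.Ioi (0 : ℝ), u ^ (s / 2 + 3) * (deriv (deriv jTheta) u) ^ 2)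
      = 9 / (8 * (s - 2))
        + (∫ u in Set.Ioi (1 : ℝ), u ^ (s / 2 + 3) * (deriv (deriv jTheta) u) ^ 2)
        + (∫ u in Set.Ioi (1 : ℝ), u ^ (-s / 2 + 4) * (deriv (deriv jTheta) u) ^ 2)
        + 6 * (∫ u in Set.Ioi (1 : ℝ),
            u ^ (-s / 2 + 3) * (deriv jTheta u * deriv (deriv jTheta) u))
        + (3 / 2) * (∫ u in Set.Ioi (1 : ℝ),
            u ^ (-s / 2 + 2) * (jTheta u * deriv (deriv jTheta) u))
        + (9 / 2) * (∫ u in Set.Ioi (1 : ℝ),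
            u ^ (-s / 2 + 1) * (jTheta u * deriv jTheta u))
        + 9 * (∫ u in Set.Ioi (1 : ℝ), u ^ (-s / 2 + 2) * (deriv jTheta u) ^ 2)
        + (9 / 16) * ∫ u in Set.Ioi (1 : ℝ), u ^ (-s / 2) * ((jTheta u) ^ 2 - 1) := by
  obtain ⟨hIoo, hIoo_eq⟩ := integrableOn_Ioo_zero_one_and_integral_eq s hs
  have hIoi : IntegrableOn (fun u ↦ u ^ (s / 2 + 3) * deriv (deriv jTheta) u ^ 2) (Ioi 1) := by
    simp only [sq]
    exact integrableOn_rpow_mul_iterate_deriv_jTheta_mul _ 2 two_ne_zero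
  rw [← Ioc_union_Ioi_eq_Ioi zero_le_one, setIntegral_union (Ioc_disjoint_Ioi le_rfl)
    measurableSet_Ioi ((integrableOn_Ioc_iff_integrableOn_Ioo).2 hIoo) hIoi,
    integral_Ioc_eq_integral_Ioo, hIoo_eq]
  ring
end

section
/- For every real s, ∫₁^∞ u^{−s/2+1} θ(u) θ'(u) du = (1/4)(s−2) K₀(2−s) − (1/2)(θ(1)² − 1). -/
/-! Since `2θθ' = (θ² - 1)'`, the identity is integration by parts against `u ^ (1 - s/2)` on
`(1, ∞)`. The boundary term at `∞` vanishes and every integral converges because `θ - 1` and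
`θ'` decay exponentially; for `θ' = -π ∑ n² e^{-πn²u}` this is the termwise bound
`e^{-πn²u} ≤ e^{π(1-u)} e^{-πn²}` for `n ≠ 0` and `u ≥ 1`. -/

open MeasureTheory

/-- `K₀(s) = ∫₁^∞ u^{s/2-1}(θ(u)²-1) du`. -/
noncomputable def Kzero (s : ℝ) : ℝ :=
  ∫ u in Set.Ioi (1 : ℝ), u ^ (s / 2 - 1) * ((jTheta u) ^ 2 - 1)

open Real Set Filter Asymptotics Topology

section ExpDecay

variable {f f' : ℝ → ℝ} {p q : ℝ}

lemma tendsto_zero_of_isBigO_exp_neg (hp : 0 < p) (hf : f =O[atTop] fun x => exp (-p * x)) :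
    Tendsto f atTop (𝓝 0) :=
  hf.trans_tendsto <| by
    simpa only [neg_mul, Function.comp_def, id] using
      tendsto_exp_neg_atTop_nhds_zero.comp (tendsto_id.const_mul_atTop hp)

lemma isBigO_rpow_mul_of_isBigO_exp_neg (hp : 0 < p) (hf : f =O[atTop] fun x => exp (-p * x))
    (a : ℝ) : (fun x => x ^ a * f x) =O[atTop] fun x => exp (-(p / 2) * x) := by
  have hpow := (isLittleO_rpow_exp_pos_mul_atTop a (half_pos hp)).isBigO
  refine (hpow.mul hf).congr_right fun x => ?_
  rw [← exp_add]
  ring_nf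

lemma integrableOn_Ioi_rpow_mul_of_isBigO_exp_neg (hp : 0 < p) (hcont : ContinuousOn f (Ici 1))
    (hf : f =O[atTop] fun x => exp (-p * x)) (a : ℝ) :
    IntegrableOn (fun x => x ^ a * f x) (Ioi 1) :=
  integrable_of_isBigO_exp_neg (half_pos hp)
    ((continuousOn_id.rpow_const fun _ hx => Or.inl (zero_lt_one.trans_le hx).ne').mul hcont)
    (isBigO_rpow_mul_of_isBigO_exp_neg hp hf a)

theorem integral_Ioi_rpow_mul_deriv (hp : 0 < p) (hq : 0 < q)
    (hderiv : ∀ x ∈ Ici (1 : ℝ), HasDerivAt f (f' x) x) (hcont' : ContinuousOn f' (Ici 1))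
    (hf : f =O[atTop] fun x => exp (-p * x)) (hf' : f' =O[atTop] fun x => exp (-q * x)) (a : ℝ) :
    ∫ x in Ioi 1, x ^ a * f' x = -f 1 - a * ∫ x in Ioi 1, x ^ (a - 1) * f x := by
  have hcont : ContinuousOn f (Ici 1) := fun x hx => (hderiv x hx).continuousAt.continuousWithinAt
  have hprod : ∀ x ∈ Ici (1 : ℝ), HasDerivAt (fun x => x ^ a * f x)
      (a * (x ^ (a - 1) * f x) + x ^ a * f' x) x := fun x hx =>
    ((hasDerivAt_rpow_const (Or.inl (zero_lt_one.trans_le hx).ne')).mul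
      (hderiv x hx)).congr_deriv (by ring)
  have hint₁ := (integrableOn_Ioi_rpow_mul_of_isBigO_exp_neg hp hcont hf (a - 1)).const_mul a
  have hint₂ := integrableOn_Ioi_rpow_mul_of_isBigO_exp_neg hq hcont' hf' a
  have key := integral_Ioi_of_hasDerivAt_of_tendsto
    (hprod 1 self_mem_Ici).continuousAt.continuousWithinAt
    (fun x hx => hprod x (Ioi_subset_Ici_self hx)) (hint₁.add hint₂)
    (tendsto_zero_of_isBigO_exp_neg (half_pos hp) (isBigO_rpow_mul_of_isBigO_exp_neg hp hf a))
  rw [integral_add hint₁ hint₂, integral_const_mul, one_rpow, one_mul] at key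
  linarith

end ExpDecay

section Theta

open HurwitzZeta

noncomputable def thetaMoment (u : ℝ) : ℝ :=
  ∑' n : ℤ, (n : ℝ) ^ 2 * rexp (-π * (n : ℝ) ^ 2 * u)

lemma summable_exp_neg_pi_sq_mul {u : ℝ} (hu : 0 < u) :
    Summable fun n : ℤ => rexp (-π * (n : ℝ) ^ 2 * u) := by
  simpa using (hasSum_int_evenKernel 0 hu).summable

lemma summable_sq_mul_exp_neg_pi_sq_mul {u : ℝ} (hu : 0 < u) :
    Summable fun n : ℤ => (n : ℝ) ^ 2 * rexp (-π * (n : ℝ) ^ 2 * u) :=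
  (HurwitzKernelBounds.summable_f_int 2 0 hu).congr fun n => by
    simp [HurwitzKernelBounds.f_int, sq_abs]

lemma sq_mul_exp_neg_pi_sq_mul_le_of_le (n : ℤ) {t u : ℝ} (htu : t ≤ u) :
    (n : ℝ) ^ 2 * rexp (-π * (n : ℝ) ^ 2 * u)
      ≤ (n : ℝ) ^ 2 * rexp (-π * (n : ℝ) ^ 2 * t) :=
  mul_le_mul_of_nonneg_left (exp_le_exp.2 <| by
    nlinarith [mul_nonneg (mul_nonneg pi_pos.le (sq_nonneg (n : ℝ))) (sub_nonneg.2 htu)])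
    (sq_nonneg _)

lemma sq_mul_exp_neg_pi_sq_mul_le (n : ℤ) {u : ℝ} (hu : 1 ≤ u) :
    (n : ℝ) ^ 2 * rexp (-π * (n : ℝ) ^ 2 * u)
      ≤ rexp π * rexp (-π * u) * ((n : ℝ) ^ 2 * rexp (-π * (n : ℝ) ^ 2)) := by
  rcases eq_or_ne n 0 with rfl | hn
  · simp
  have hn2 : (1 : ℝ) ≤ (n : ℝ) ^ 2 :=
    (one_le_sq_iff_one_le_abs _).2 (by exact_mod_cast Int.one_le_abs hn)
  rw [mul_left_comm, ← exp_add, ← exp_add]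
  refine mul_le_mul_of_nonneg_left (exp_le_exp.2 ?_) (sq_nonneg _)
  nlinarith [mul_nonneg (mul_nonneg pi_pos.le (sub_nonneg.2 hn2)) (sub_nonneg.2 hu)]

lemma hasDerivAt_jTheta_s14 {u : ℝ} (hu : 0 < u) : HasDerivAt jTheta (-π * thetaMoment u) u := by
  have hterm (n : ℤ) (y : ℝ) : HasDerivAt (fun z => rexp (-π * (n : ℝ) ^ 2 * z))
      (-π * ((n : ℝ) ^ 2 * rexp (-π * (n : ℝ) ^ 2 * y))) y :=
    ((hasDerivAt_id y).const_mul _).exp.congr_deriv (by simp only [id]; ring)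
  have hbound (n : ℤ) (y : ℝ) (hy : y ∈ Ioi (u / 2)) :
      ‖-π * ((n : ℝ) ^ 2 * rexp (-π * (n : ℝ) ^ 2 * y))‖
        ≤ π * ((n : ℝ) ^ 2 * rexp (-π * (n : ℝ) ^ 2 * (u / 2))) := by
    rw [norm_mul, norm_neg, norm_of_nonneg pi_pos.le, norm_of_nonneg (by positivity)]
    exact mul_le_mul_of_nonneg_left (sq_mul_exp_neg_pi_sq_mul_le_of_le n (le_of_lt hy)) pi_pos.le
  rw [thetaMoment, ← tsum_mul_left]
  exact hasDerivAt_tsum_of_isPreconnected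
    ((summable_sq_mul_exp_neg_pi_sq_mul (half_pos hu)).mul_left π) isOpen_Ioi isPreconnected_Ioi
    (fun n y _ => hterm n y) hbound (half_lt_self hu) (summable_exp_neg_pi_sq_mul hu)
    (half_lt_self hu)

lemma continuousOn_thetaMoment : ContinuousOn thetaMoment (Ioi 0) := by
  intro u hu
  have hcont : ContinuousOn thetaMoment (Ioi (u / 2)) :=
    continuousOn_tsum (fun n => by fun_prop) (summable_sq_mul_exp_neg_pi_sq_mul (half_pos hu))
      fun n y hy => by
        rw [norm_of_nonneg (by positivity)]
        exact sq_mul_exp_neg_pi_sq_mul_le_of_le n (le_of_lt hy)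
  exact (hcont.continuousAt (Ioi_mem_nhds (half_lt_self hu))).continuousWithinAt

lemma continuousOn_jTheta : ContinuousOn jTheta (Ioi 0) :=
  fun _ hu => (hasDerivAt_jTheta_s14 hu).continuousAt.continuousWithinAt

lemma continuousOn_deriv_jTheta : ContinuousOn (deriv jTheta) (Ioi 0) :=
  (continuousOn_const.mul continuousOn_thetaMoment).congr fun _ hu => (hasDerivAt_jTheta_s14 hu).deriv

lemma thetaMoment_nonneg (u : ℝ) : 0 ≤ thetaMoment u :=
  tsum_nonneg fun _ => by positivity

lemma thetaMoment_le {u : ℝ} (hu : 1 ≤ u) :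
    thetaMoment u ≤ rexp π * thetaMoment 1 * rexp (-π * u) := by
  rw [mul_right_comm, thetaMoment, thetaMoment, ← tsum_mul_left]
  refine Summable.tsum_le_tsum (fun n => ?_) (summable_sq_mul_exp_neg_pi_sq_mul (by linarith))
    ((summable_sq_mul_exp_neg_pi_sq_mul one_pos).mul_left _)
  simpa using sq_mul_exp_neg_pi_sq_mul_le n hu

lemma isBigO_thetaMoment : thetaMoment =O[atTop] fun u => rexp (-π * u) := by
  refine IsBigO.of_bound (rexp π * thetaMoment 1) ?_
  filter_upwards [eventually_ge_atTop 1] with u hu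
  rw [norm_of_nonneg (thetaMoment_nonneg u), norm_of_nonneg (exp_pos _).le]
  exact thetaMoment_le hu

lemma jTheta_eq_evenKernel {u : ℝ} (hu : 0 < u) : jTheta u = evenKernel 0 u := by
  rw [jTheta]
  simpa using (hasSum_int_evenKernel 0 hu).tsum_eq

lemma exists_isBigO_jTheta_sub_one :
    ∃ p, 0 < p ∧ (fun u => jTheta u - 1) =O[atTop] fun u => rexp (-p * u) := by
  obtain ⟨p, hp, h⟩ := isBigO_atTop_evenKernel_sub 0
  refine ⟨p, hp, (EventuallyEq.isBigO ?_).trans h⟩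
  filter_upwards [eventually_gt_atTop 0] with u hu
  simp [jTheta_eq_evenKernel hu]

lemma tendsto_jTheta_atTop : Tendsto jTheta atTop (𝓝 1) := by
  obtain ⟨p, hp, h⟩ := exists_isBigO_jTheta_sub_one
  simpa using (tendsto_zero_of_isBigO_exp_neg hp h).add_const 1

lemma exists_isBigO_jTheta_sq_sub_one :
    ∃ p, 0 < p ∧ (fun u => jTheta u ^ 2 - 1) =O[atTop] fun u => rexp (-p * u) := by
  obtain ⟨p, hp, h⟩ := exists_isBigO_jTheta_sub_one
  have hbdd := (tendsto_jTheta_atTop.add_const 1).isBigO_one ℝ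
  exact ⟨p, hp, (h.mul hbdd).congr (fun u => by ring) fun u => mul_one _⟩

lemma isBigO_jTheta_mul_deriv :
    (fun u => jTheta u * deriv jTheta u) =O[atTop] fun u => rexp (-π * u) := by
  have hderiv : deriv jTheta =ᶠ[atTop] fun u => -π * thetaMoment u := by
    filter_upwards [eventually_gt_atTop 0] with u hu using (hasDerivAt_jTheta_s14 hu).deriv
  have h := (tendsto_jTheta_atTop.isBigO_one ℝ).mul
    ((isBigO_thetaMoment.const_mul_left (-π)).congr' hderiv.symm EventuallyEq.rfl)
  exact h.congr_right fun u => one_mul _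

end Theta

/-- For every real `s`,
`∫₁^∞ u^{-s/2+1} θ(u)θ'(u) du = (1/4)(s-2) K₀(2-s) - (1/2)(θ(1)²-1)`. -/
theorem J1_eval (s : ℝ) :
    (∫ u in Set.Ioi (1 : ℝ), u ^ (-s / 2 + 1) * (jTheta u * deriv jTheta u))
      = (1 / 4) * (s - 2) * Kzero (2 - s) - (1 / 2) * ((jTheta 1) ^ 2 - 1) := by
  obtain ⟨p, hp, hsq⟩ := exists_isBigO_jTheta_sq_sub_one
  have hderiv (u : ℝ) (hu : u ∈ Ici (1 : ℝ)) : HasDerivAt (fun u => jTheta u ^ 2 - 1)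
      (2 * (jTheta u * deriv jTheta u)) u := by
    have h := hasDerivAt_jTheta_s14 (zero_lt_one.trans_le hu)
    exact ((h.pow 2).sub_const 1).congr_deriv (by rw [h.deriv]; ring)
  have hcont : ContinuousOn (fun u => 2 * (jTheta u * deriv jTheta u)) (Ici 1) :=
    (continuousOn_const.mul (continuousOn_jTheta.mul continuousOn_deriv_jTheta)).mono
      fun _ hu => zero_lt_one.trans_le (mem_Ici.1 hu)
  have hibp := integral_Ioi_rpow_mul_deriv hp pi_pos hderiv hcont hsq
    (isBigO_jTheta_mul_deriv.const_mul_left 2) (-s / 2 + 1)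
  simp only [mul_left_comm _ (2 : ℝ), integral_const_mul] at hibp
  rw [Kzero, show (2 - s) / 2 - 1 = -s / 2 + 1 - 1 by ring]
  linarith
end
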